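/- arXiv:2205.10923 — 2 statements merged into one kernel-verified Lean document; each statement's English description precedes it below -/
import Mathlib

section
/- Let X be a Poisson random variable with mean λ > 0, i.e. P(X = n) = e^{−λ} λⁿ / n! for every n ∈ ℕ. Then for every ε > 0, P(|X − λ| ≥ ε) ≤ 2 · exp(−ε² / (2(λ + ε))). Equivalently, the sum of e^{−λ} λⁿ / n! over all natural numbers n with |n − λ| ≥ ε is at most 2 · exp(−ε² / (2(λ + ε))). -/
/-!
Chernoff's exponential-moment method. If `t (n - a) ≥ 0` on a set `S` of natural numbers, the
Poisson mass of `S` is at most `E e^{t (X - a)} = exp (λ (e^t - 1) - t a)`. For the upper tail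
`a = λ + ε` take `t = log ((λ + ε) / λ) = -log (1 - u)` with `u = ε / (λ + ε)`; the bound
`-log (1 - u) ≥ u + u² / 2` makes the exponent at most `-ε² / (2 (λ + ε))`. For the lower tail
`a = λ - ε` take `t = -ε / λ`; the bound `e^{-s} ≤ 1 - s + s² / 2` makes the exponent at most
`-ε² / (2 λ)`. The two tails together give the factor `2`.
-/

open Real Nat

namespace Real

theorem exp_neg_le_one_sub_add_sq_div_two {s : ℝ} (hs : 0 ≤ s) :
    exp (-s) ≤ 1 - s + s ^ 2 / 2 := by
  have hpos : 0 < 1 + s + s ^ 2 / 2 := by positivity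
  calc exp (-s) = (exp s)⁻¹ := exp_neg s
    _ ≤ (1 + s + s ^ 2 / 2)⁻¹ := inv_anti₀ hpos (quadratic_le_exp_of_nonneg hs)
    _ ≤ 1 - s + s ^ 2 / 2 := by
      -- `(1 - s + s²/2) (1 + s + s²/2) = 1 + s⁴/4`
      rw [inv_le_iff_one_le_mul₀' hpos]
      nlinarith [pow_nonneg hs 4]

theorem add_sq_div_two_le_neg_log_one_sub {u : ℝ} (h0 : 0 ≤ u) (h1 : u < 1) :
    u + u ^ 2 / 2 ≤ -log (1 - u) := by
  have hlog := hasSum_pow_div_log_of_abs_lt_one (abs_lt.2 ⟨by linarith, h1⟩)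
  have := sum_le_hasSum (Finset.range 2) (fun n _ => by positivity) hlog
  norm_num [Finset.sum_range_succ] at this
  linarith

end Real

theorem summable_poisson (lam : ℝ) :
    Summable fun n : ℕ => exp (-lam) * lam ^ n / (n ! : ℝ) := by
  simpa only [mul_div_assoc] using (summable_pow_div_factorial lam).mul_left (exp (-lam))

theorem hasSum_poisson_mul_exp (lam t : ℝ) :
    HasSum (fun n : ℕ => exp (-lam) * lam ^ n / (n ! : ℝ) * exp (t * n))
      (exp (lam * (exp t - 1))) := by
  have h := (NormedSpace.expSeries_div_hasSum_exp (lam * exp t)).mul_left (exp (-lam))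
  rw [← exp_eq_exp_ℝ] at h
  have hterm : (fun n : ℕ => exp (-lam) * lam ^ n / (n ! : ℝ) * exp (t * n)) =
      fun n => exp (-lam) * ((lam * exp t) ^ n / (n ! : ℝ)) := by
    funext n
    rw [mul_pow, ← exp_nat_mul, mul_comm t]
    ring
  rwa [hterm, show lam * (exp t - 1) = -lam + lam * exp t by ring, exp_add]

theorem tsum_poisson_le_of_mul_le {lam t a : ℝ} (hlam : 0 ≤ lam) {S : Set ℕ}
    (hS : ∀ n ∈ S, t * a ≤ t * n) :
    ∑' n : S, exp (-lam) * lam ^ (n : ℕ) / ((n : ℕ)! : ℝ) ≤ exp (lam * (exp t - 1) - t * a) := by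
  set p : ℕ → ℝ := fun n => exp (-lam) * lam ^ n / (n ! : ℝ)
  have htilt := (hasSum_poisson_mul_exp lam t).mul_right (exp (-(t * a)))
  calc ∑' n : S, p n ≤ ∑' n : S, p n * exp (t * n) * exp (-(t * a)) := by
        refine Summable.tsum_le_tsum (fun n => ?_) ((summable_poisson lam).subtype S)
          (htilt.summable.subtype S)
        rw [mul_assoc, ← exp_add]
        exact le_mul_of_one_le_right (by positivity) (one_le_exp (by linarith [hS n n.2]))
    _ ≤ ∑' n, p n * exp (t * n) * exp (-(t * a)) :=
        htilt.summable.tsum_subtype_le _ S fun n => by positivity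
    _ = exp (lam * (exp t - 1) - t * a) := by
        rw [htilt.tsum_eq, ← exp_add, ← sub_eq_add_neg]

theorem tsum_poisson_upper_tail_le {lam ε : ℝ} (hlam : 0 < lam) (hε : 0 ≤ ε) :
    ∑' n : {n : ℕ | lam + ε ≤ n}, exp (-lam) * lam ^ (n : ℕ) / ((n : ℕ)! : ℝ)
      ≤ exp (-(ε ^ 2) / (2 * (lam + ε))) := by
  have hpos : 0 < lam + ε := by linarith
  obtain ⟨u, hu⟩ : ∃ u, u = ε / (lam + ε) := ⟨_, rfl⟩
  have hu0 : 0 ≤ u := hu ▸ div_nonneg hε hpos.le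
  have hu1 : 1 - u = lam / (lam + ε) := by rw [hu]; field_simp; ring
  have hlog := add_sq_div_two_le_neg_log_one_sub hu0 (by linarith [div_pos hlam hpos])
  have hexp : exp (-log (1 - u)) = (lam + ε) / lam := by
    rw [exp_neg, exp_log (hu1 ▸ div_pos hlam hpos), hu1, inv_div]
  refine (tsum_poisson_le_of_mul_le hlam.le (t := -log (1 - u)) (a := lam + ε)
    fun n hn => mul_le_mul_of_nonneg_left hn (by nlinarith)).trans (exp_le_exp.2 ?_)
  rw [hexp]
  calc lam * ((lam + ε) / lam - 1) - -log (1 - u) * (lam + ε)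
      ≤ lam * ((lam + ε) / lam - 1) - (u + u ^ 2 / 2) * (lam + ε) := by gcongr
    _ = -(ε ^ 2) / (2 * (lam + ε)) := by rw [hu]; field_simp; ring

theorem tsum_poisson_lower_tail_le {lam ε : ℝ} (hlam : 0 < lam) (hε : 0 ≤ ε) :
    ∑' n : {n : ℕ | n ≤ lam - ε}, exp (-lam) * lam ^ (n : ℕ) / ((n : ℕ)! : ℝ)
      ≤ exp (-(ε ^ 2) / (2 * (lam + ε))) := by
  have hs : 0 ≤ ε / lam := div_nonneg hε hlam.le
  refine (tsum_poisson_le_of_mul_le hlam.le (t := -(ε / lam)) (a := lam - ε)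
    fun n hn => by nlinarith [show (n : ℝ) ≤ lam - ε from hn]).trans (exp_le_exp.2 ?_)
  have hexp := exp_neg_le_one_sub_add_sq_div_two hs
  calc lam * (exp (-(ε / lam)) - 1) - -(ε / lam) * (lam - ε)
      ≤ lam * (-(ε / lam) + (ε / lam) ^ 2 / 2) - -(ε / lam) * (lam - ε) := by
        gcongr; linarith
    _ = -(ε ^ 2) / (2 * lam) := by field_simp; ring
    _ ≤ -(ε ^ 2) / (2 * (lam + ε)) := by
        rw [neg_div, neg_div, neg_le_neg_iff]
        gcongr
        linarith

/-- **Chernoff-type bound for Poisson random variables.** If `X` is Poisson with mean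
`λ > 0`, i.e. `P(X = n) = e^{-λ} λ^n / n!`, then for every `ε > 0`,
`P(|X - λ| ≥ ε) ≤ 2 exp(-ε² / (2(λ + ε)))`; equivalently, the sum of `e^{-λ} λ^n / n!`
over all natural numbers `n` with `|n - λ| ≥ ε` is at most `2 exp(-ε² / (2(λ + ε)))`. -/
theorem poisson_chernoff (lam : ℝ) (hlam : 0 < lam) (ε : ℝ) (hε : 0 < ε) :
    ∑' n : {n : ℕ // ε ≤ |(n : ℝ) - lam|},
        Real.exp (-lam) * lam ^ (n : ℕ) / (Nat.factorial (n : ℕ) : ℝ)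
      ≤ 2 * Real.exp (-(ε ^ 2) / (2 * (lam + ε))) := by
  have hsplit :
      {n : ℕ | ε ≤ |(n : ℝ) - lam|} = {n : ℕ | lam + ε ≤ n} ∪ {n : ℕ | n ≤ lam - ε} := by
    ext n
    simp only [Set.mem_ofPred_eq, Set.mem_union, le_abs, le_sub_iff_add_le', neg_sub]
    rw [add_comm (n : ℝ)]
  have hdisj : Disjoint {n : ℕ | lam + ε ≤ n} {n : ℕ | n ≤ lam - ε} :=
    Set.disjoint_left.2 fun n (h₁ : lam + ε ≤ n) (h₂ : (n : ℝ) ≤ lam - ε) => by linarith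
  set p : ℕ → ℝ := fun n => exp (-lam) * lam ^ n / (n ! : ℝ)
  change ∑' n : {n : ℕ | ε ≤ |(n : ℝ) - lam|}, p n ≤ _
  rw [hsplit, Summable.tsum_union_disjoint hdisj ((summable_poisson lam).subtype _)
    ((summable_poisson lam).subtype _), two_mul]
  exact add_le_add (tsum_poisson_upper_tail_le hlam hε.le)
    (tsum_poisson_lower_tail_le hlam hε.le)
end

section
/- Let I be a countable type, and let p : I → ℝ≥0 and p_k : I → ℝ≥0 for k ∈ ℕ be functions satisfying ∑_{x ∈ I} p(x) = 1 and ∑_{x ∈ I} p_k(x) = 1 for every k. Suppose that for every x ∈ I one has p(x) ≤ liminf_{k → ∞} p_k(x). Then for every x ∈ I, p_k(x) → p(x) as k → ∞. -/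
open Filter Topology MeasureTheory
open scoped ENNReal NNReal

/-!
Mass cannot appear from nowhere. By Fatou's lemma for sums, the mass `p` puts off a point `x`
is at most the liminf of the mass `p_k` puts off `x`; since `p_k` has total mass at most that
of `p`, this forces `limsup p_k x ≤ p x`. Working in `ℝ≥0∞` makes Fatou's lemma and the
liminf/limsup algebra unconditional.
-/

theorem ENNReal.tsum_liminf_le_liminf_tsum {ι α : Type*} {l : Filter ι} [l.IsCountablyGenerated]
    (f : ι → α → ℝ≥0∞) :
    ∑' a, liminf (fun i => f i a) l ≤ liminf (fun i => ∑' a, f i a) l := by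
  let _ : MeasurableSpace α := ⊤
  simpa only [lintegral_count] using
    lintegral_liminf_le (μ := Measure.count) fun i => measurable_from_top (f := f i)

open scoped Classical in
theorem ENNReal.limsup_le_of_tsum_le_of_le_liminf {ι α : Type*} {l : Filter ι}
    [l.IsCountablyGenerated] {p : α → ℝ≥0∞} {q : ι → α → ℝ≥0∞} {c : ℝ≥0∞} (hc : c ≠ ∞)
    (hp : c ≤ ∑' a, p a) (hq : ∀ i, ∑' a, q i a ≤ c) (h : ∀ a, p a ≤ liminf (fun i => q i a) l)
    (a : α) : limsup (fun i => q i a) l ≤ p a := by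
  have hq_le : ∀ i, q i a ≤ c - ∑' b, ite (b = a) 0 (q i b) := fun i => by
    have hsplit := (ENNReal.tsum_eq_add_tsum_ite (f := q i) a).symm.trans_le (hq i)
    exact ENNReal.le_sub_of_add_le_right (ne_top_of_le_ne_top hc (le_add_self.trans hsplit)) hsplit
  have hrest : ∑' b, ite (b = a) 0 (p b) ≤ liminf (fun i => ∑' b, ite (b = a) 0 (q i b)) l :=
    calc ∑' b, ite (b = a) 0 (p b)
        ≤ ∑' b, liminf (fun i => ite (b = a) 0 (q i b)) l := by
          refine ENNReal.tsum_le_tsum fun b => ?_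
          split_ifs
          exacts [zero_le, h b]
      _ ≤ _ := ENNReal.tsum_liminf_le_liminf_tsum _
  calc limsup (fun i => q i a) l
      ≤ limsup (fun i => c - ∑' b, ite (b = a) 0 (q i b)) l := limsup_le_limsup (.of_forall hq_le)
    _ = c - liminf (fun i => ∑' b, ite (b = a) 0 (q i b)) l := ENNReal.limsup_const_sub _ _ hc
    _ ≤ c - ∑' b, ite (b = a) 0 (p b) := tsub_le_tsub_left hrest c
    _ ≤ p a := by
      rw [tsub_le_iff_right, ← ENNReal.tsum_eq_add_tsum_ite]
      exact hp

theorem ENNReal.tendsto_of_tsum_le_of_le_liminf {ι α : Type*} {l : Filter ι}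
    [l.IsCountablyGenerated] {p : α → ℝ≥0∞} {q : ι → α → ℝ≥0∞} {c : ℝ≥0∞} (hc : c ≠ ∞)
    (hp : c ≤ ∑' a, p a) (hq : ∀ i, ∑' a, q i a ≤ c) (h : ∀ a, p a ≤ liminf (fun i => q i a) l)
    (a : α) : Tendsto (fun i => q i a) l (𝓝 (p a)) :=
  tendsto_of_le_liminf_of_limsup_le (h a)
    (ENNReal.limsup_le_of_tsum_le_of_le_liminf hc hp hq h a)

theorem ENNReal.tsum_coe_eq_one {α : Type*} {f : α → ℝ≥0} (hf : ∑' a, f a = 1) :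
    ∑' a, (f a : ℝ≥0∞) = 1 := by
  have hsum : Summable f := by
    by_contra hns
    simp [tsum_eq_zero_of_not_summable hns] at hf
  rw [← ENNReal.coe_tsum hsum, hf, ENNReal.coe_one]

theorem NNReal.coe_le_liminf_of_toReal_le_liminf {ι : Type*} {l : Filter ι} [l.NeBot] {a : ℝ≥0}
    {u : ι → ℝ≥0} (hu : IsBoundedUnder (· ≤ ·) l u) (h : (a : ℝ) ≤ liminf (fun i => (u i : ℝ)) l) :
    (a : ℝ≥0∞) ≤ liminf (fun i => (u i : ℝ≥0∞)) l := by
  rw [NNReal.toReal_liminf, NNReal.coe_le_coe] at h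
  rw [← ENNReal.ofNNReal_liminf hu.isCoboundedUnder_ge]
  exact ENNReal.coe_le_coe.mpr h

theorem pmf_tendsto_of_le_liminf_general {I : Type*}
    (p : I → NNReal) (pk : ℕ → I → NNReal)
    (hp : ∑' x, p x = 1) (hpk : ∀ k, ∑' x, pk k x = 1)
    (hliminf : ∀ x, (p x : ℝ) ≤ liminf (fun k => (pk k x : ℝ)) atTop) :
    ∀ x, Tendsto (fun k => (pk k x : ℝ)) atTop (nhds (p x)) := by
  have hpk_bdd : ∀ x, IsBoundedUnder (· ≤ ·) atTop fun k => pk k x := fun x =>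
    isBoundedUnder_of ⟨1, fun k => by
      simpa [ENNReal.tsum_coe_eq_one (hpk k)] using
        ENNReal.le_tsum (f := fun y => (pk k y : ℝ≥0∞)) x⟩
  intro x
  refine NNReal.tendsto_coe.mpr (ENNReal.tendsto_coe.mp ?_)
  exact ENNReal.tendsto_of_tsum_le_of_le_liminf ENNReal.one_ne_top
    (ENNReal.tsum_coe_eq_one hp).ge (fun k => (ENNReal.tsum_coe_eq_one (hpk k)).le)
    (fun y => NNReal.coe_le_liminf_of_toReal_le_liminf (hpk_bdd y) (hliminf y)) x

/-- **Fatou-type upgrade for probability mass functions.** If `p` and `p_k`, `k ∈ ℕ`, are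
probability mass functions on a countable type `I` and `p x ≤ liminf_k p_k x` for every
`x ∈ I`, then `p_k x → p x` for every `x ∈ I`. -/
theorem pmf_tendsto_of_le_liminf {I : Type*} [Countable I]
    (p : I → NNReal) (pk : ℕ → I → NNReal)
    (hp : ∑' x, p x = 1) (hpk : ∀ k, ∑' x, pk k x = 1)
    (hliminf : ∀ x, (p x : ℝ) ≤ liminf (fun k => (pk k x : ℝ)) atTop) :
    ∀ x, Tendsto (fun k => (pk k x : ℝ)) atTop (nhds (p x)) :=
  pmf_tendsto_of_le_liminf_general p pk hp hpk hliminf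
end
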